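/- arXiv:2209.01990 — 7 statements merged into one kernel-verified Lean document; each statement's English description precedes it below -/
import Mathlib

section
/- Let C be a normal topological space and let r ≥ 1. For each i = 1, …, r let A_i be a property (predicate) of open subsets of C such that: (i) if an open set U satisfies A_i, then every open subset of U satisfies A_i; and (ii) if a family of pairwise disjoint open sets each satisfies A_i, then their union satisfies A_i. Assume that for each i the space C admits a cover by n_i + 1 open sets each satisfying A_i. Then C admits a cover by N + 1 open sets, where N = n_1 + n_2 + ⋯ + n_r, each of which satisfies all of the properties A_1, …, A_r simultaneously. -/
/-!
Choose for each `i` a partition of unity `f i` subordinate to the `i`-th cover. At a point `x`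
the partial sums of `f i · x` cut `[0, 1]` into `n i + 1` consecutive intervals, one for each member
of the cover. For a choice `a` of one member from every cover, the length `w a x` of the common part
of the chosen intervals is continuous in `x`, and `w a x > 0` forces `x` into every chosen member.
At each `x` some `w a x` is positive (the intervals containing `0`), and at most `N + 1` are: the
left endpoints of overlaps of positive length are distinct, and they are breakpoints of the
partitions, of which there are at most `N + 1`.

Then a colouring trick turns the weights into the cover: for a finite set `c` of choices, the
points where every `w a` with `a ∈ c` is positive and exceeds every `w b` with `b ∉ c` form an open
set; two such sets with `#c = #c'` are disjoint, and `x` lies in the one for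
`c = {a | 0 < w a x}`. Taking unions over `#c = k + 1` for `k ≤ N` gives the `N + 1` members.
-/

open Finset

section Breakpoints

variable {α : Type*} [LinearOrder α] {m : ℕ} {s : Fin (m + 1) → α} {t : α}

theorem Fin.exists_castSucc_le_lt_succ (h0 : s 0 ≤ t) (k : Fin (m + 1)) (hk : t < s k) :
    ∃ j : Fin m, s j.castSucc ≤ t ∧ t < s j.succ := by
  induction k using Fin.induction with
  | zero => exact absurd hk h0.not_gt
  | succ j ih =>
    by_cases hj : t < s j.castSucc
    · exact ih hj
    · exact ⟨j, not_lt.1 hj, hk⟩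

theorem Fin.eq_of_castSucc_le_lt_succ (hs : Monotone s) {j j' : Fin m}
    (hj : s j.castSucc ≤ t ∧ t < s j.succ) (hj' : s j'.castSucc ≤ t ∧ t < s j'.succ) :
    j = j' := by
  have key : ∀ {j j' : Fin m}, s j.castSucc ≤ t ∧ t < s j.succ → s j'.castSucc ≤ t → ¬ j < j' :=
    fun {j j'} hj hj' hlt => (hs (Fin.succ_le_castSucc_iff.2 hlt)).trans hj' |>.not_gt hj.2
  exact le_antisymm (not_lt.1 (key hj' hj.1)) (not_lt.1 (key hj hj'.1))

end Breakpoints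

section IntervalOverlap

variable {ι : Type*} [Fintype ι] [Nonempty ι] {n : ι → ℕ}

-- `s i` lists the breakpoints of the `i`-th partition of an interval, and `a i` selects its
-- piece `[s i (a i), s i (a i + 1)]`.
noncomputable def leftEnd (s : ∀ i, Fin (n i + 2) → ℝ) (a : ∀ i, Fin (n i + 1)) : ℝ :=
  univ.sup' univ_nonempty fun i => s i (a i).castSucc

noncomputable def intervalOverlap (s : ∀ i, Fin (n i + 2) → ℝ) (a : ∀ i, Fin (n i + 1)) : ℝ :=
  (univ.inf' univ_nonempty fun i => s i (a i).succ) - leftEnd s a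

variable (s : ∀ i, Fin (n i + 2) → ℝ)

theorem le_leftEnd (a : ∀ i, Fin (n i + 1)) (i : ι) : s i (a i).castSucc ≤ leftEnd s a :=
  le_sup' (fun i => s i (a i).castSucc) (mem_univ i)

theorem intervalOverlap_pos_iff (a : ∀ i, Fin (n i + 1)) :
    0 < intervalOverlap s a ↔ ∀ i, leftEnd s a < s i (a i).succ := by
  simp [intervalOverlap]

theorem intervalOverlap_le (a : ∀ i, Fin (n i + 1)) (i : ι) :
    intervalOverlap s a ≤ s i (a i).succ - s i (a i).castSucc :=
  sub_le_sub (inf'_le _ (mem_univ i)) (le_leftEnd s a i)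

theorem exists_intervalOverlap_pos (h0 : ∀ i, s i 0 = 0) (hpos : ∀ i, ∃ k, 0 < s i k) :
    ∃ a, 0 < intervalOverlap s a := by
  choose k hk using hpos
  choose a ha using fun i => Fin.exists_castSucc_le_lt_succ (h0 i).le (k i) (hk i)
  refine ⟨a, (intervalOverlap_pos_iff s a).2 fun i => lt_of_le_of_lt ?_ (ha i).2⟩
  exact sup'_le _ _ fun i _ => (ha i).1

theorem card_intervalOverlap_pos_le [DecidableEq ι] (hs : ∀ i, Monotone (s i))
    (h0 : ∀ i, s i 0 = 0) :
    #{a | 0 < intervalOverlap s a} ≤ ∑ i, n i + 1 := by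
  set T : Finset ℝ := insert 0 (univ.image fun p : Σ i, Fin (n i) => s p.1 p.2.succ.castSucc)
  have hT : #T ≤ ∑ i, n i + 1 :=
    (card_insert_le _ _).trans <| by
      simpa using card_image_le (s := (univ : Finset (Σ i, Fin (n i))))
  refine le_trans (card_le_card_of_injOn (leftEnd s) (fun a _ => ?_) fun a ha a' ha' h => ?_) hT
  · obtain ⟨i, -, hi⟩ := exists_mem_eq_sup' univ_nonempty fun i => s i (a i).castSucc
    rcases Fin.eq_zero_or_eq_succ (a i) with h | ⟨j, h⟩
    · simp [T, leftEnd, hi, h, h0]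
    · exact mem_insert_of_mem (mem_image.2 ⟨⟨i, j⟩, mem_univ _, by simp [leftEnd, hi, h]⟩)
  · simp only [coe_filter, mem_univ, true_and, Set.mem_ofPred_eq, intervalOverlap_pos_iff] at ha ha'
    funext i
    exact Fin.eq_of_castSucc_le_lt_succ (hs i) ⟨le_leftEnd s a i, ha i⟩
      ⟨h ▸ le_leftEnd s a' i, h ▸ ha' i⟩

end IntervalOverlap

section DominantCells

variable {C ι : Type*} (w : ι → C → ℝ)

def dominantCell (c : Finset ι) : Set C :=
  {x | ∀ q ∈ c, 0 < w q x ∧ ∀ q' ∉ c, w q' x < w q x}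

def dominantLayer (k : ℕ) : Set C :=
  ⋃₀ (dominantCell w '' {c | #c = k + 1})

variable {w}

theorem isOpen_dominantCell [TopologicalSpace C] [Finite ι] (hw : ∀ q, Continuous (w q))
    (c : Finset ι) : IsOpen (dominantCell w c) := by
  simp only [dominantCell, Set.ofPred_forall, Set.ofPred_and]
  exact isOpen_iInter_of_finite fun q => isOpen_iInter_of_finite fun _ =>
    (isOpen_lt continuous_const (hw q)).inter <| isOpen_iInter_of_finite fun q' =>
      isOpen_iInter_of_finite fun _ => isOpen_lt (hw q') (hw q)

theorem dominantCell_subset {c : Finset ι} {q : ι} (hq : q ∈ c) :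
    dominantCell w c ⊆ {x | 0 < w q x} :=
  fun _ hx => (hx q hq).1

theorem disjoint_dominantCell {c c' : Finset ι} (hcard : #c = #c') (hne : c ≠ c') :
    Disjoint (dominantCell w c) (dominantCell w c') := by
  have key : ∀ {c c' : Finset ι}, #c = #c' → c ≠ c' → ∃ q ∈ c, q ∉ c' := fun h hne =>
    not_subset.1 fun hsub => hne (eq_of_subset_of_card_le hsub h.ge)
  obtain ⟨q, hq, hq'⟩ := key hcard hne
  obtain ⟨p, hp', hp⟩ := key hcard.symm hne.symm
  exact Set.disjoint_left.2 fun x hx hx' => ((hx q hq).2 p hp).not_gt ((hx' p hp').2 q hq')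

theorem mem_dominantCell_filter_pos [Fintype ι] (x : C) :
    x ∈ dominantCell w {q | 0 < w q x} := by
  intro q hq
  simp only [mem_filter, mem_univ, true_and, not_lt] at hq ⊢
  exact ⟨hq, fun q' hq' => hq'.trans_lt hq⟩

theorem pairwiseDisjoint_dominantCell (k : ℕ) :
    (dominantCell w '' {c | #c = k + 1}).PairwiseDisjoint id := by
  rintro _ ⟨c, hc, rfl⟩ _ ⟨c', hc', rfl⟩ hne
  exact disjoint_dominantCell (hc.trans hc'.symm) fun h => hne (h ▸ rfl)

theorem isOpen_dominantLayer [TopologicalSpace C] [Finite ι] (hw : ∀ q, Continuous (w q)) (k : ℕ) :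
    IsOpen (dominantLayer w k) :=
  isOpen_sUnion <| Set.forall_mem_image.2 fun c _ => isOpen_dominantCell hw c

theorem iUnion_dominantLayer_eq_univ [Fintype ι] {N : ℕ} (hpos : ∀ x, ∃ q, 0 < w q x)
    (hcard : ∀ x, #{q | 0 < w q x} ≤ N + 1) :
    ⋃ k : Fin (N + 1), dominantLayer w k = Set.univ := by
  refine Set.eq_univ_of_forall fun x => ?_
  obtain ⟨q, hq⟩ := hpos x
  have hne : 0 < #{q | 0 < w q x} := card_pos.2 ⟨q, by simpa using hq⟩
  refine Set.mem_iUnion.2 ⟨⟨#{q | 0 < w q x} - 1, by have := hcard x; omega⟩, ?_⟩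
  exact ⟨_, ⟨_, by simp only [Set.mem_ofPred_eq]; omega, rfl⟩, mem_dominantCell_filter_pos x⟩

theorem dominantLayer_satisfies [TopologicalSpace C] [Finite ι] (hw : ∀ q, Continuous (w q))
    {P : Set C → Prop}
    (hsub : ∀ U V : Set C, IsOpen U → IsOpen V → V ⊆ U → P U → P V)
    (hdisj : ∀ 𝒱 : Set (Set C), (∀ V ∈ 𝒱, IsOpen V) → 𝒱.PairwiseDisjoint id →
      (∀ V ∈ 𝒱, P V) → P (⋃₀ 𝒱))
    (hP : ∀ q, P {x | 0 < w q x}) (k : ℕ) : P (dominantLayer w k) := by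
  refine hdisj _ (Set.forall_mem_image.2 fun c _ => isOpen_dominantCell hw c)
    (pairwiseDisjoint_dominantCell k) (Set.forall_mem_image.2 fun c hc => ?_)
  obtain ⟨q, hq⟩ := card_pos.1 (show 0 < #c by simp only [Set.mem_ofPred_eq] at hc; omega)
  exact hsub _ _ (isOpen_lt continuous_const (hw q)) (isOpen_dominantCell hw c)
    (dominantCell_subset hq) (hP q)

end DominantCells

section Weights

variable {C : Type*} [TopologicalSpace C]

theorem Fin.monotone_partialSum {m : ℕ} {g : Fin m → ℝ} (hg : ∀ j, 0 ≤ g j) :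
    Monotone (Fin.partialSum g) :=
  Fin.monotone_iff_le_succ.2 fun j => by
    rw [Fin.partialSum_succ]
    exact le_add_of_nonneg_right (hg j)

theorem Continuous.partialSum {m : ℕ} {f : Fin m → C → ℝ} (hf : ∀ j, Continuous (f j))
    (k : Fin (m + 1)) : Continuous fun x => Fin.partialSum (fun j => f j x) k := by
  induction k using Fin.induction with
  | zero => simpa using continuous_const
  | succ j ih =>
    simp only [Fin.partialSum_succ]
    exact ih.add (hf j)

theorem Continuous.intervalOverlap {ι : Type*} [Fintype ι] [Nonempty ι] {n : ι → ℕ}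
    {s : C → ∀ i, Fin (n i + 2) → ℝ} (hs : ∀ i k, Continuous fun x => s x i k)
    (a : ∀ i, Fin (n i + 1)) : Continuous fun x => intervalOverlap (s x) a :=
  (Continuous.finset_inf'_apply _ fun i _ => hs i _).sub
    (Continuous.finset_sup'_apply _ fun i _ => hs i _)

theorem exists_weights_subordinate [NormalSpace C] {ι : Type*} [Fintype ι] [DecidableEq ι]
    [Nonempty ι] {n : ι → ℕ} (U : ∀ i, Fin (n i + 1) → Set C) (hUo : ∀ i j, IsOpen (U i j))
    (hU : ∀ i, ⋃ j, U i j = Set.univ) :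
    ∃ w : (∀ i, Fin (n i + 1)) → C → ℝ, (∀ a, Continuous (w a)) ∧ (∀ x, ∃ a, 0 < w a x) ∧
      (∀ x, #{a | 0 < w a x} ≤ ∑ i, n i + 1) ∧ ∀ a i, {x | 0 < w a x} ⊆ U i (a i) := by
  choose f hf using fun i => PartitionOfUnity.exists_isSubordinate_of_locallyFinite
    isClosed_univ (U i) (hUo i) (locallyFinite_of_finite _) (hU i).ge
  set s : C → ∀ i, Fin (n i + 2) → ℝ := fun x i => Fin.partialSum fun j => f i j x
  have hs_mono : ∀ x i, Monotone (s x i) := fun x i =>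
    Fin.monotone_partialSum fun j => (f i).nonneg j x
  have hs_succ : ∀ x i j, s x i j.succ - s x i j.castSucc = f i j x := fun x i j => by
    simp only [s, Fin.partialSum_succ, add_sub_cancel_left]
  refine ⟨fun a x => intervalOverlap (s x) a,
    Continuous.intervalOverlap fun i => Continuous.partialSum fun j => (f i j).continuous,
    fun x => exists_intervalOverlap_pos (s x) (fun i => Fin.partialSum_zero _) fun i => ?_,
    fun x => card_intervalOverlap_pos_le (s x) (hs_mono x) fun i => Fin.partialSum_zero _,
    fun a i x hx => hf i (a i) (subset_tsupport _ ?_)⟩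
  · obtain ⟨j, hj⟩ := (f i).exists_pos (Set.mem_univ x)
    have h0 : 0 ≤ s x i j.castSucc :=
      (Fin.partialSum_zero _).symm.trans_le (hs_mono x i (Fin.zero_le _))
    exact ⟨j.succ, by linarith [hs_succ x i j]⟩
  · have := intervalOverlap_le (s x) a i
    rw [hs_succ] at this
    exact (hx.out.trans_le this).ne'

end Weights

/-- If a normal space `C` admits, for each `i = 1, …, r`, an open cover by
`n_i + 1` open sets satisfying a property `A_i` which is inherited by open subsets and by
disjoint unions of open sets, then `C` admits an open cover by `N + 1` open sets,
`N = n_1 + ⋯ + n_r`, each satisfying all the properties `A_1, …, A_r` simultaneously. -/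
theorem cover_combination {C : Type*} [TopologicalSpace C] [NormalSpace C]
    (r : ℕ) (hr : 1 ≤ r) (A : Fin r → Set C → Prop) (n : Fin r → ℕ)
    (hsub : ∀ i, ∀ U V : Set C, IsOpen U → IsOpen V → V ⊆ U → A i U → A i V)
    (hdisj : ∀ i, ∀ 𝒱 : Set (Set C), (∀ V ∈ 𝒱, IsOpen V) → 𝒱.PairwiseDisjoint id →
      (∀ V ∈ 𝒱, A i V) → A i (⋃₀ 𝒱))
    (hcov : ∀ i, ∃ U : Fin (n i + 1) → Set C,
      (∀ j, IsOpen (U j)) ∧ (⋃ j, U j) = Set.univ ∧ ∀ j, A i (U j)) :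
    ∃ U : Fin ((∑ i, n i) + 1) → Set C,
      (∀ j, IsOpen (U j)) ∧ (⋃ j, U j) = Set.univ ∧ ∀ j, ∀ i, A i (U j) := by
  have : Nonempty (Fin r) := ⟨⟨0, hr⟩⟩
  choose U hUo hU hUA using hcov
  obtain ⟨w, hw, hpos, hcard, hwU⟩ := exists_weights_subordinate U hUo hU
  refine ⟨fun k => dominantLayer w k, fun k => isOpen_dominantLayer hw k,
    iUnion_dominantLayer_eq_univ hpos hcard, fun k i => dominantLayer_satisfies hw (hsub i)
      (hdisj i) (fun a => ?_) k⟩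
  exact hsub i _ _ (hUo i (a i)) (isOpen_lt continuous_const (hw a)) (hwU a i) (hUA i (a i))
end

section
/- Let E_r →^{p_r} E_{r-1} →^{p_{r-1}} ⋯ →^{p_1} E_0 be a tower of continuous maps between normal topological spaces, and let p = p_1 ∘ p_2 ∘ ⋯ ∘ p_r : E_r → E_0 be the composite. Then secat[p_1 : E_1 → E_0] ≤ secat[p : E_r → E_0] ≤ secat[p_1 : E_1 → E_0] + Σ_{i=1}^{r-1} secat_{(p_1∘p_2∘⋯∘p_i)}[p_{i+1} : E_{i+1} → E_i], where p_1∘p_2∘⋯∘p_i : E_i → E_0 denotes the composite. -/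
/-- The sectional category of a continuous map `p : E → B`: the least `n` such that `B`
admits a cover by `n+1` open sets, each admitting a continuous section of `p`. -/
noncomputable def secat {E B : Type*} [TopologicalSpace E] [TopologicalSpace B]
    (p : C(E, B)) : ℕ∞ :=
  sInf {n : ℕ∞ | ∃ m : ℕ, n = m ∧ ∃ U : Fin (m + 1) → Set B,
    (∀ i, IsOpen (U i)) ∧ (⋃ i, U i) = Set.univ ∧
    ∀ i, ∃ s : C((U i : Set B), E), ∀ x, p (s x) = (x : B)}

/-- The relative sectional category `secat_f[p : E → B]` of `p : E → B` with respect to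
`f : B → C`: the least `n` such that there are open sets `U_0, …, U_n ⊆ C` with
`f(B) ⊆ U_0 ∪ ⋯ ∪ U_n` and `p` admitting a continuous section over each `f⁻¹(U_i)`. -/
noncomputable def secatf {E B C : Type*} [TopologicalSpace E] [TopologicalSpace B]
    [TopologicalSpace C] (p : C(E, B)) (f : C(B, C)) : ℕ∞ :=
  sInf {n : ℕ∞ | ∃ m : ℕ, n = m ∧ ∃ U : Fin (m + 1) → Set C,
    (∀ i, IsOpen (U i)) ∧ Set.range f ⊆ (⋃ i, U i) ∧
    ∀ i, ∃ s : C((⇑f ⁻¹' U i : Set B), E), ∀ x, p (s x) = (x : B)}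

/-- Given a tower of maps `p i : E (i+1) → E i` (so `p ⟨i-1,_⟩` is the paper's
`p_i : E_i → E_{i-1}`), `finComps p i` is the composite `p_1 ∘ p_2 ∘ ⋯ ∘ p_i : E_i → E_0`. -/
noncomputable def finComps {r : ℕ} {E : Fin (r + 1) → Type*} [∀ i, TopologicalSpace (E i)]
    (p : ∀ i : Fin r, C(E i.succ, E i.castSucc)) (i : Fin (r + 1)) : C(E i, E 0) :=
  Fin.induction (ContinuousMap.id _) (fun j ih => ih.comp (p j)) i

/-!
The lower bound holds because `p` factors through `p₁`, so a local section of `p` yields one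
of `p₁`. The upper bound follows, one floor of the tower at a time, from
`secat (f ∘ g) ≤ secat f + secat_f[g]` for `C` normal. Given covers `U₀, …, Uₙ` (sections of `f`)
and `V₀, …, Vₘ` (sections of `g` over `f⁻¹(Vⱼ)`), sections of `f ∘ g` exist over each
`Uᵢ ∩ Vⱼ`. To merge the two covers into `n + m + 1` sets, take continuous `φᵢ`, `ψⱼ` positive
only on `Uᵢ`, resp. `Vⱼ`, with some `φᵢ` and some `ψⱼ` positive at every point, and let the `c`-th
set consist of the points at which some `c + 2` of these functions, among them a `φᵢ` and a `ψⱼ`,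
are positive and strictly larger than all the others. For a fixed `c` the pieces indexed by
different sets of functions are disjoint and open, so local sections over them glue.
-/
open Set Function Topology

section Sections

variable {E X : Type*} [TopologicalSpace E] [TopologicalSpace X]

def HasSectionOn (q : C(E, X)) (D : Set X) : Prop :=
  ∃ s : C(D, E), ∀ x, q (s x) = x

theorem HasSectionOn.mono {q : C(E, X)} {D D' : Set X} (h : HasSectionOn q D) (hD : D' ⊆ D) :
    HasSectionOn q D' :=
  let ⟨s, hs⟩ := h
  ⟨s.comp ⟨inclusion hD, continuous_inclusion hD⟩, fun _ => hs _⟩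

theorem HasSectionOn.subset_range {q : C(E, X)} {D : Set X} (h : HasSectionOn q D) :
    D ⊆ range q :=
  let ⟨s, hs⟩ := h
  fun x hx => ⟨s ⟨x, hx⟩, hs _⟩

theorem HasSectionOn.iUnion {q : C(E, X)} {ι : Type*} {A : ι → Set X}
    (hA : ∀ a, IsOpen (A a)) (hdisj : Pairwise (Disjoint on A))
    (hsec : ∀ a, HasSectionOn q (A a)) : HasSectionOn q (⋃ a, A a) := by
  choose s hs using hsec
  let S : ι → Set (⋃ a, A a) := fun a => Subtype.val ⁻¹' A a
  have agree : ∀ a b (x : ⋃ a, A a) (ha : x ∈ S a) (hb : x ∈ S b),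
      s a ⟨x, ha⟩ = s b ⟨x, hb⟩ := by
    intro a b x ha hb
    obtain rfl : a = b := by_contra fun hab => (hdisj hab).ne_of_mem ha hb rfl
    rfl
  have nhds : ∀ x : ⋃ a, A a, ∃ a, S a ∈ 𝓝 x := fun x =>
    let ⟨a, ha⟩ := mem_iUnion.1 x.2
    ⟨a, ((hA a).preimage continuous_subtype_val).mem_nhds ha⟩
  refine ⟨ContinuousMap.liftCover S (fun a => (s a).comp ⟨fun x => ⟨x.1.1, x.2⟩, by fun_prop⟩)
    agree nhds, fun x => ?_⟩
  obtain ⟨a, ha⟩ := mem_iUnion.1 x.2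
  exact (congrArg q (ContinuousMap.liftCover_coe (i := a) ⟨x, ha⟩)).trans (hs a _)

theorem HasSectionOn.comp {B : Type*} [TopologicalSpace B] {f : C(B, X)} {g : C(E, B)}
    {U V : Set X} (hf : HasSectionOn f U) (hg : HasSectionOn g (f ⁻¹' V)) :
    HasSectionOn (f.comp g) (U ∩ V) := by
  obtain ⟨s, hs⟩ := hf
  obtain ⟨t, ht⟩ := hg
  have hsV : ∀ x : ↥(U ∩ V), s ⟨x, x.2.1⟩ ∈ f ⁻¹' V := fun x => by
    simpa only [mem_preimage, hs] using x.2.2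
  refine ⟨⟨fun x => t ⟨s ⟨x, x.2.1⟩, hsV x⟩, ?_⟩, fun x => ?_⟩
  · exact t.continuous.comp ((s.continuous.comp (by fun_prop)).subtype_mk _)
  · simp only [ContinuousMap.comp_apply, ContinuousMap.coe_mk, ht, hs]

end Sections

section Dominance

variable {X κ : Type*}

def dominanceSet (χ : κ → X → ℝ) (S : Finset κ) : Set X :=
  {x | ∀ a ∈ S, 0 < χ a x ∧ ∀ b ∉ S, χ b x < χ a x}

theorem isOpen_dominanceSet [TopologicalSpace X] [Finite κ] {χ : κ → X → ℝ}
    (hχ : ∀ a, Continuous (χ a)) (S : Finset κ) : IsOpen (dominanceSet χ S) := by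
  simp only [dominanceSet, ofPred_forall, ofPred_and]
  exact isOpen_biInter_finset fun a _ => (isOpen_lt continuous_const (hχ a)).inter <|
    isOpen_iInter_of_finite fun b => isOpen_iInter_of_finite fun _ => isOpen_lt (hχ b) (hχ a)

theorem disjoint_dominanceSet {χ : κ → X → ℝ} {S T : Finset κ} (hST : S ≠ T)
    (hcard : S.card = T.card) : Disjoint (dominanceSet χ S) (dominanceSet χ T) := by
  obtain ⟨a, haS, haT⟩ := Finset.not_subset.1 fun h =>
    hST (Finset.eq_of_subset_of_card_le h hcard.ge)
  obtain ⟨b, hbT, hbS⟩ := Finset.not_subset.1 fun h =>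
    hST (Finset.eq_of_subset_of_card_le h hcard.le).symm
  exact disjoint_left.2 fun x hxS hxT => lt_asymm ((hxS a haS).2 b hbS) ((hxT b hbT).2 a haT)

theorem mem_dominanceSet_filter_pos [Fintype κ] (χ : κ → X → ℝ) (x : X) :
    x ∈ dominanceSet χ {a | 0 < χ a x} := by
  intro a ha
  rw [Finset.mem_filter] at ha
  refine ⟨ha.2, fun b hb => ?_⟩
  simp only [Finset.mem_filter, Finset.mem_univ, true_and, not_lt] at hb
  exact hb.trans_lt ha.2

end Dominance

section Covers

variable {X : Type*} [TopologicalSpace X] [NormalSpace X]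

theorem exists_continuous_pos_subordinate {ι : Type*} [Finite ι] {U : ι → Set X}
    (hU : ∀ i, IsOpen (U i)) (hcov : ⋃ i, U i = univ) :
    ∃ φ : ι → C(X, ℝ), (∀ i x, 0 < φ i x → x ∈ U i) ∧ ∀ x, ∃ i, 0 < φ i x := by
  obtain ⟨f, hf⟩ := PartitionOfUnity.exists_isSubordinate_of_locallyFinite isClosed_univ U hU
    (locallyFinite_of_finite U) hcov.ge
  exact ⟨fun i => f i, fun i x hx => hf i (subset_tsupport _ hx.ne'),
    fun x => f.exists_pos (mem_univ x)⟩

theorem exists_cover_refining_inter {n m : ℕ} {U : Fin (n + 1) → Set X}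
    {V : Fin (m + 1) → Set X} (hU : ∀ i, IsOpen (U i)) (hUc : ⋃ i, U i = univ)
    (hV : ∀ j, IsOpen (V j)) (hVc : ⋃ j, V j = univ) :
    ∃ W : Fin (n + m + 1) → Set X, ⋃ c, W c = univ ∧
      ∀ c, ∃ (ι : Type) (A : ι → Set X), (∀ a, IsOpen (A a)) ∧ Pairwise (Disjoint on A) ∧
        W c = ⋃ a, A a ∧ ∀ a, ∃ i j, A a ⊆ U i ∩ V j := by
  classical
  obtain ⟨φ, hφU, hφ⟩ := exists_continuous_pos_subordinate hU hUc
  obtain ⟨ψ, hψV, hψ⟩ := exists_continuous_pos_subordinate hV hVc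
  let χ : Fin (n + 1) ⊕ Fin (m + 1) → X → ℝ := Sum.elim (fun i => φ i) (fun j => ψ j)
  have hχ : ∀ a, Continuous (χ a) := by rintro (i | j) <;> simp only [χ, Sum.elim] <;> fun_prop
  let Good (c : Fin (n + m + 1)) : Type :=
    {S : Finset (Fin (n + 1) ⊕ Fin (m + 1)) //
      S.card = c + 2 ∧ (∃ i, .inl i ∈ S) ∧ ∃ j, .inr j ∈ S}
  refine ⟨fun c => ⋃ S : Good c, dominanceSet χ S, ?_, fun c =>
    ⟨Good c, fun S => dominanceSet χ S, fun S => isOpen_dominanceSet hχ S,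
      fun S T hST => disjoint_dominanceSet (mt Subtype.ext hST) (S.2.1.trans T.2.1.symm), rfl,
      fun ⟨S, _, ⟨i, hi⟩, ⟨j, hj⟩⟩ =>
        ⟨i, j, fun x hx => ⟨hφU i x (hx _ hi).1, hψV j x (hx _ hj).1⟩⟩⟩⟩
  refine eq_univ_of_forall fun x => ?_
  simp only [mem_iUnion]
  obtain ⟨i, hi⟩ := hφ x
  obtain ⟨j, hj⟩ := hψ x
  let S : Finset (Fin (n + 1) ⊕ Fin (m + 1)) := {a | 0 < χ a x}
  have hiS : .inl i ∈ S := by simpa [S, χ] using hi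
  have hjS : .inr j ∈ S := by simpa [S, χ] using hj
  have two_le : 2 ≤ S.card :=
    Finset.one_lt_card.2 ⟨_, hiS, _, hjS, Sum.inl_ne_inr⟩
  have le_card : S.card ≤ n + m + 2 := by
    have := S.card_le_univ
    simp only [Fintype.card_sum, Fintype.card_fin] at this
    omega
  exact ⟨⟨S.card - 2, by omega⟩, ⟨S, by simp only; omega, ⟨i, hiS⟩, ⟨j, hjS⟩⟩,
    mem_dominanceSet_filter_pos χ x⟩

end Covers

theorem Fin.apply_last_le_apply_zero_add_sum {M : Type*} [AddCommMonoid M] [PartialOrder M]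
    [IsOrderedAddMonoid M] {r : ℕ} (a : Fin (r + 1) → M) (b : Fin r → M)
    (h : ∀ i, a i.succ ≤ a i.castSucc + b i) : a (Fin.last r) ≤ a 0 + ∑ i, b i := by
  induction r with
  | zero => simp
  | succ r ih =>
    calc a (Fin.last (r + 1)) ≤ a (Fin.last r).castSucc + b (Fin.last r) := by
          simpa only [Fin.succ_last] using h (Fin.last r)
      _ ≤ (a 0 + ∑ i : Fin r, b i.castSucc) + b (Fin.last r) := by
        gcongr
        exact ih (a ∘ Fin.castSucc) (b ∘ Fin.castSucc) fun i => by
          simpa only [Function.comp_apply, ← Fin.succ_castSucc] using h i.castSucc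
      _ = a 0 + ∑ i, b i := by rw [Fin.sum_univ_castSucc, add_assoc]

section Secat

variable {E B C : Type*} [TopologicalSpace E] [TopologicalSpace B] [TopologicalSpace C]

theorem secat_le_of_cover {p : C(E, B)} {m : ℕ} (U : Fin (m + 1) → Set B)
    (hU : ∀ i, IsOpen (U i)) (hcov : ⋃ i, U i = univ) (hsec : ∀ i, HasSectionOn p (U i)) :
    secat p ≤ m :=
  sInf_le ⟨m, rfl, U, hU, hcov, hsec⟩

theorem exists_cover_of_secat_ne_top {p : C(E, B)} (h : secat p ≠ ⊤) :
    ∃ m : ℕ, secat p = m ∧ ∃ U : Fin (m + 1) → Set B,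
      (∀ i, IsOpen (U i)) ∧ ⋃ i, U i = univ ∧ ∀ i, HasSectionOn p (U i) := by
  unfold secat at h ⊢
  exact csInf_mem <| nonempty_iff_ne_empty.2 <| ne_of_apply_ne sInf (h.trans_eq sInf_empty.symm)

theorem exists_cover_of_secatf_ne_top {p : C(E, B)} {f : C(B, C)} (h : secatf p f ≠ ⊤) :
    ∃ m : ℕ, secatf p f = m ∧ ∃ V : Fin (m + 1) → Set C,
      (∀ i, IsOpen (V i)) ∧ range f ⊆ ⋃ i, V i ∧ ∀ i, HasSectionOn p (f ⁻¹' V i) := by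
  unfold secatf at h ⊢
  exact csInf_mem <| nonempty_iff_ne_empty.2 <| ne_of_apply_ne sInf (h.trans_eq sInf_empty.symm)

theorem secat_id : secat (ContinuousMap.id B) = 0 :=
  nonpos_iff_eq_zero.1 <| secat_le_of_cover (m := 0) (fun _ => univ) (fun _ => isOpen_univ)
    (iUnion_const _) fun _ => ⟨⟨Subtype.val, continuous_subtype_val⟩, fun _ => rfl⟩

theorem secatf_id (p : C(E, B)) : secatf p (ContinuousMap.id B) = secat p := by
  unfold secatf secat
  simp only [ContinuousMap.coe_id, range_id, univ_subset_iff]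
  rfl

theorem secat_le_secat_comp (g : C(E, B)) (f : C(B, C)) : secat f ≤ secat (f.comp g) :=
  le_sInf fun _ ⟨_, hm, U, hU, hcov, hsec⟩ => hm ▸ secat_le_of_cover U hU hcov fun i =>
    let ⟨s, hs⟩ := hsec i
    ⟨g.comp s, hs⟩

theorem secat_comp_le [NormalSpace C] (g : C(E, B)) (f : C(B, C)) :
    secat (f.comp g) ≤ secat f + secatf g f := by
  rcases eq_or_ne (secat f) ⊤ with h₁ | h₁
  · simp [h₁]
  rcases eq_or_ne (secatf g f) ⊤ with h₂ | h₂
  · simp [h₂]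
  obtain ⟨n, hn, U, hU, hUc, hUs⟩ := exists_cover_of_secat_ne_top h₁
  obtain ⟨m, hm, V, hV, hVf, hVs⟩ := exists_cover_of_secatf_ne_top h₂
  have hVc : ⋃ j, V j = univ :=
    univ_subset_iff.1 <| hUc ▸ iUnion_subset fun i => (hUs i).subset_range.trans hVf
  obtain ⟨W, hWc, hW⟩ := exists_cover_refining_inter hU hUc hV hVc
  choose ι A hA hdisj hWA hAUV using hW
  rw [hn, hm, ← Nat.cast_add]
  refine secat_le_of_cover W (fun c => hWA c ▸ isOpen_iUnion (hA c)) hWc fun c =>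
    hWA c ▸ HasSectionOn.iUnion (hA c) (hdisj c) fun a => ?_
  obtain ⟨i, j, hij⟩ := hAUV c a
  exact ((hUs i).comp (hVs j)).mono hij

end Secat

section Tower

variable {r : ℕ} {E : Fin (r + 1) → Type*} [∀ i, TopologicalSpace (E i)]
  (p : ∀ i : Fin r, C(E i.succ, E i.castSucc))

theorem finComps_zero : finComps p 0 = ContinuousMap.id (E 0) := rfl

theorem finComps_succ (i : Fin r) :
    finComps p i.succ = (finComps p i.castSucc).comp (p i) := rfl

theorem monotone_secat_finComps : Monotone fun i => secat (finComps p i) :=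
  Fin.monotone_iff_le_succ.2 fun i => by
    simpa only [finComps_succ] using secat_le_secat_comp (p i) (finComps p i.castSucc)

theorem secat_finComps_last_le [NormalSpace (E 0)] :
    secat (finComps p (Fin.last r)) ≤ ∑ i, secatf (p i) (finComps p i.castSucc) := by
  simpa only [finComps_zero, secat_id, zero_add] using
    Fin.apply_last_le_apply_zero_add_sum (fun i => secat (finComps p i)) _ fun i => by
      simpa only [finComps_succ] using secat_comp_le (p i) (finComps p i.castSucc)

end Tower

/-- For a tower `E_r → E_{r-1} → ⋯ → E_0` of continuous maps between normal
spaces with total composite `p = p_1 ∘ ⋯ ∘ p_r : E_r → E_0`, one has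
`secat[p_1] ≤ secat[p] ≤ secat[p_1] + Σ_{i=1}^{r-1} secat_{p_1⋯p_i}[p_{i+1}]`. -/
theorem secat_tower {r : ℕ} (hr : 0 < r) {E : Fin (r + 1) → Type*}
    [∀ i, TopologicalSpace (E i)] [∀ i, NormalSpace (E i)]
    (p : ∀ i : Fin r, C(E i.succ, E i.castSucc)) :
    secat (p ⟨0, hr⟩) ≤ secat (finComps p (Fin.last r)) ∧
    secat (finComps p (Fin.last r)) ≤
      secat (p ⟨0, hr⟩) +
        ∑ i ∈ Finset.univ.erase (⟨0, hr⟩ : Fin r),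
          secatf (p i) (finComps p i.castSucc) := by
  have hp₁ : finComps p (⟨0, hr⟩ : Fin r).succ = p ⟨0, hr⟩ := rfl
  have hsecatf₁ :
      secatf (p ⟨0, hr⟩) (finComps p (⟨0, hr⟩ : Fin r).castSucc) = secat (p ⟨0, hr⟩) :=
    secatf_id _
  refine ⟨hp₁ ▸ monotone_secat_finComps p (Fin.le_last _), ?_⟩
  calc secat (finComps p (Fin.last r)) ≤ ∑ i, secatf (p i) (finComps p i.castSucc) :=
        secat_finComps_last_le p
    _ = _ := by
        rw [← Finset.add_sum_erase _ _ (Finset.mem_univ ⟨0, hr⟩), hsecatf₁]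
end

section
/- Let p : E → B be a continuous map and let f : B → C and f' : B → C' be continuous maps. (a) If there is a continuous map h : C → C' such that f' = h ∘ f, then secat_f[p] ≤ secat_{f'}[p]. (b) If moreover h restricts to a homeomorphism from f(B) onto f'(B) (both with their subspace topologies), then secat_f[p] = secat_{f'}[p]. -/
open TopologicalSpace

theorem secatf_mono_of_induced_le {E B C C' : Type*} [TopologicalSpace E] [TopologicalSpace B]
    [tC : TopologicalSpace C] [tC' : TopologicalSpace C'] (p : C(E, B)) {f : C(B, C)}
    {f' : C(B, C')} (hle : induced f tC ≤ induced f' tC') :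
    secatf p f ≤ secatf p f' := by
  apply sInf_le_sInf
  rintro n ⟨m, rfl, V, hV_open, hV_cover, hV_section⟩
  have hU : ∀ i, ∃ U : Set C, IsOpen U ∧ ⇑f ⁻¹' U = ⇑f' ⁻¹' V i := fun i =>
    isOpen_induced_iff.1 (hle _ ⟨V i, hV_open i, rfl⟩)
  choose U hU_open hU_preimage using hU
  refine ⟨m, rfl, U, hU_open, ?_, fun i => hU_preimage i ▸ hV_section i⟩
  rintro _ ⟨b, rfl⟩
  obtain ⟨i, hi⟩ := Set.mem_iUnion.1 (hV_cover ⟨b, rfl⟩)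
  exact Set.mem_iUnion.2 ⟨i, (Set.ext_iff.1 (hU_preimage i) b).2 hi⟩

theorem induced_le_induced_comp {B C C' : Type*} [tC : TopologicalSpace C]
    [tC' : TopologicalSpace C'] (f : B → C) {h : C → C'} (hh : Continuous h) :
    induced f tC ≤ induced (h ∘ f) tC' := by
  rw [← induced_compose]
  exact induced_mono hh.le_induced

theorem induced_eq_of_homeomorph_range {B C C' : Type*} [tC : TopologicalSpace C]
    [tC' : TopologicalSpace C'] {f : B → C} {f' : B → C'}
    (e : Set.range f ≃ₜ Set.range f') (he : ∀ b, (e (Set.rangeFactorization f b) : C') = f' b) :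
    induced f tC = induced f' tC' := by
  have hfactor : Set.rangeFactorization f' = e ∘ Set.rangeFactorization f :=
    funext fun b => Subtype.ext (he b).symm
  calc induced f tC
      = induced (Set.rangeFactorization f) (induced Subtype.val tC) :=
        (induced_compose (f := Set.rangeFactorization f) (g := Subtype.val)).symm
    _ = induced (Set.rangeFactorization f) (induced e (induced Subtype.val tC')) :=
        congrArg _ e.induced_eq.symm
    _ = induced (Set.rangeFactorization f') (induced Subtype.val tC') := by
        rw [hfactor, ← induced_compose]
    _ = induced f' tC' := induced_compose

/-- Let `p : E → B`, `f : B → C`, `f' : B → C'` be continuous, and let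
`h : C → C'` be continuous with `f' = h ∘ f`. Then (a) `secat_f[p] ≤ secat_{f'}[p]`;
and (b) if moreover `h` restricts to a homeomorphism from `f(B)` onto `f'(B)`, then
`secat_f[p] = secat_{f'}[p]`. -/
theorem secatf_dependence_on_f {E B C C' : Type*} [TopologicalSpace E] [TopologicalSpace B]
    [TopologicalSpace C] [TopologicalSpace C'] (p : C(E, B)) (f : C(B, C)) (f' : C(B, C'))
    (h : C(C, C')) (hcomp : ∀ b, f' b = h (f b)) :
    secatf p f ≤ secatf p f' ∧
    ((∃ e : (Set.range f : Set C) ≃ₜ (Set.range f' : Set C'),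
        ∀ x : (Set.range f : Set C), (e x : C') = h (x : C)) →
      secatf p f = secatf p f') := by
  have hf' : ⇑f' = h ∘ f := funext hcomp
  have hle : secatf p f ≤ secatf p f' :=
    secatf_mono_of_induced_le p (hf' ▸ induced_le_induced_comp f h.continuous)
  refine ⟨hle, fun ⟨e, he⟩ => le_antisymm hle (secatf_mono_of_induced_le p ?_)⟩
  exact (induced_eq_of_homeomorph_range e fun b => (he _).trans (hcomp b).symm).ge
end

section
/- Let G be a topological group acting continuously on a path-connected topological space X, let r ≥ 2, and let K be a path-connected, locally compact, metrizable space with r pairwise distinct marked points k_1, …, k_r ∈ K. Let ρ_r^K : C(K, X) → X^r be the evaluation map ρ_r^K(α) = (α(k_1), …, α(k_r)) on the mapping space with the compact-open topology, where G acts pointwise on C(K, X) and diagonally on X^r. Then TC_{r,G}(X) equals the least integer n ≥ 0 such that X^r admits a cover by n+1 G-invariant open sets, each admitting a continuous G-equivariant section of ρ_r^K (with the convention that this number is ∞ if no such cover exists). -/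
open scoped unitInterval

/-- The sequential equivariant topological complexity defined with respect to a space `K`
with marked points `k 0, …, k (r-1)`: the least `n` such that `(Fin r → X)` (with the
diagonal `G`-action) admits a cover by `n+1` `G`-invariant open sets, each admitting a
continuous `G`-equivariant section of the evaluation map `C(K, X) → (Fin r → X)`,
`α ↦ (α (k 0), …, α (k (r-1)))` (equivariance and the `G`-action on `C(K, X)` being
pointwise). -/
noncomputable def eqTCVia (G X : Type*) [Group G] [TopologicalSpace X] [MulAction G X]
    {r : ℕ} (K : Type*) [TopologicalSpace K] (k : Fin r → K) : ℕ∞ :=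
  sInf {n : ℕ∞ | ∃ m : ℕ, n = m ∧ ∃ U : Fin (m + 1) → Set (Fin r → X),
    (∀ i, IsOpen (U i)) ∧ (⋃ i, U i) = Set.univ ∧
    (∀ i (g : G), ∀ x ∈ U i, g • x ∈ U i) ∧
    ∀ i, ∃ s : C((U i : Set (Fin r → X)), C(K, X)),
      (∀ x : U i, ∀ j, s x (k j) = (x : Fin r → X) j) ∧
      ∀ (x y : U i) (g : G), (y : Fin r → X) = g • (x : Fin r → X) →
        ∀ κ : K, s y κ = g • s x κ}

/-- The sequential equivariant topological complexity `TC_{r,G}(X)` of Bayeh–Sarkar and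
Colman–Grant, relative to the time points `0 = t 0 < t 1 < ⋯ < t (r-1) = 1` in `[0,1]`. -/
noncomputable def eqTC (G X : Type*) [Group G] [TopologicalSpace X] [MulAction G X]
    {r : ℕ} (t : Fin r → unitInterval) : ℕ∞ :=
  eqTCVia G X unitInterval t

/- The invariant only depends on the marked space `(K, k)` up to maps of marked spaces:
precomposing sections with a continuous `f : A → B` sending the marks `a j` to `b j` gives
`eqTCVia G X A a ≤ eqTCVia G X B b`. Tietze extension yields such a map `K → [0,1]`
(finitely many distinct marks form a closed discrete set), and path-connectedness of `K`
yields one `[0,1] → K` by concatenating paths between consecutive marks. -/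

theorem eqTCVia_le_of_continuousMap (G X : Type*) [Group G] [TopologicalSpace X]
    [MulAction G X] {r : ℕ} {A B : Type*} [TopologicalSpace A] [TopologicalSpace B]
    {a : Fin r → A} {b : Fin r → B} (f : C(A, B)) (hf : ⇑f ∘ a = b) :
    eqTCVia G X A a ≤ eqTCVia G X B b := by
  apply sInf_le_sInf
  rintro n ⟨m, rfl, U, hopen, hcover, hinv, hsec⟩
  refine ⟨m, rfl, U, hopen, hcover, hinv, fun i => ?_⟩
  obtain ⟨s, hs_eval, hs_equiv⟩ := hsec i
  refine ⟨(ContinuousMap.compRightContinuousMap X f).comp s, fun x j => ?_,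
    fun x y g hxy κ => hs_equiv x y g hxy (f κ)⟩
  simpa [← hf] using hs_eval x j

section PathThroughPoints

variable {K : Type*} [TopologicalSpace K] [PathConnectedSpace K]

theorem ContinuousMap.exists_eqOn_Iic_apply_eq (γ : C(ℝ, K)) {a b : ℝ} (hab : a < b) (y : K) :
    ∃ δ : C(ℝ, K), Set.EqOn δ γ (Set.Iic a) ∧ δ b = y := by
  classical
  let π := PathConnectedSpace.somePath (γ a) y
  have hba : b - a ≠ 0 := sub_ne_zero.2 hab.ne'
  refine ⟨⟨fun x => if x ≤ a then γ x else π.extend ((x - a) / (b - a)), ?_⟩,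
    fun _ hx => if_pos hx, ?_⟩
  · refine Continuous.if_le γ.continuous (π.extend.continuous.comp (by fun_prop))
      continuous_id continuous_const fun x hx => ?_
    simp [hx]
  · simp [hab.not_ge, div_self hba]

theorem ContinuousMap.exists_real_apply_eq_of_strictMono :
    ∀ {r : ℕ} (u : Fin r → ℝ), StrictMono u → ∀ p : Fin r → K,
      ∃ γ : C(ℝ, K), ∀ j, γ (u j) = p j
  | 0, _, _, _ => ⟨.const ℝ (Classical.arbitrary K), fun j => j.elim0⟩
  | 1, _, _, p => ⟨.const ℝ (p 0), fun j => by rw [Subsingleton.elim j 0]; rfl⟩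
  | n + 2, u, hu, p => by
    obtain ⟨γ, hγ⟩ := exists_real_apply_eq_of_strictMono (u ∘ Fin.castSucc)
      (hu.comp Fin.strictMono_castSucc) (p ∘ Fin.castSucc)
    obtain ⟨δ, hδγ, hδ⟩ := γ.exists_eqOn_Iic_apply_eq
      (hu (Fin.castSucc_lt_last (Fin.last n))) (p (Fin.last (n + 1)))
    refine ⟨δ, Fin.lastCases hδ fun i => ?_⟩
    rw [hδγ (Set.mem_Iic.2 <| hu.monotone (Fin.castSucc_le_castSucc_iff.2 (Fin.le_last i)))]
    exact hγ i

end PathThroughPoints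

/-- For a topological group `G` acting continuously on a path-connected space
`X`, `r ≥ 2`, and a path-connected locally compact metrizable space `K` with `r` pairwise
distinct marked points `k 0, …, k (r-1)`, the invariant `TC_{r,G}(X)` equals its analogue
defined using the evaluation map `C(K, X) → X^r` at the points `k j`. -/
theorem eqTC_eq_eqTCVia {G X K : Type*} [Group G]
    [TopologicalSpace X] [MulAction G X]
    [TopologicalSpace K] [PathConnectedSpace K]
    [TopologicalSpace.MetrizableSpace K]
    {r : ℕ} (t : Fin r → unitInterval) (htm : StrictMono t)
    (k : Fin r → K) (hk : Function.Injective k) :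
    eqTC G X t = eqTCVia G X K k := by
  obtain ⟨φ, hφ⟩ := (ContinuousMap.mk t continuous_of_discreteTopology).exists_extension'
    (continuous_of_discreteTopology.isClosedEmbedding hk)
  obtain ⟨γ, hγ⟩ := ContinuousMap.exists_real_apply_eq_of_strictMono (fun j => (t j : ℝ))
    (fun _ _ h => htm h) k
  have hγI : ⇑(γ.comp ⟨Subtype.val, continuous_subtype_val⟩) ∘ t = k := funext hγ
  exact le_antisymm (eqTCVia_le_of_continuousMap G X _ hγI)
    (eqTCVia_le_of_continuousMap G X φ hφ)
end

section
/- Let G be a topological group acting continuously on topological spaces X and P, and let r ≥ 2. Let ρ_r ×_G 1 : (C([0,1],X) × P)/G → (X^r × P)/G denote the continuous map induced on the orbit spaces of the diagonal G-actions by ρ_r × id_P : C([0,1],X) × P → X^r × P. Then secat[ρ_r ×_G 1] ≤ TC_{r,G}(X). (For a locally trivial bundle p : E = X ×_G P → B = P/G with structure group G associated to a principal G-bundle τ : P → B, the left-hand side equals the sequential parametrized topological complexity TC_r[p : E → B] under the canonical identifications E^I_B ≅ C([0,1],X) ×_G P and E^r_B ≅ X^r ×_G P.) -/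
open scoped unitInterval

/-- The evaluation map `ρ_r : C([0,1], X) → X^r`, `γ ↦ (γ (t 0), …, γ (t (r-1)))`. -/
noncomputable def pathEval (X : Type*) [TopologicalSpace X] {r : ℕ}
    (t : Fin r → unitInterval) : C(C(unitInterval, X), Fin r → X) :=
  ⟨fun γ i => γ (t i), continuous_pi fun i => ContinuousEvalConst.continuous_eval_const (t i)⟩

/-- The continuous map induced on orbit spaces by a `G`-equivariant continuous map. -/
noncomputable def inducedQuotMap {G A B : Type*} [Group G] [TopologicalSpace A]
    [TopologicalSpace B] [MulAction G A] [MulAction G B]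
    (F : C(A, B)) (hF : ∀ (g : G) (a : A), F (g • a) = g • F a) :
    C(Quotient (MulAction.orbitRel G A), Quotient (MulAction.orbitRel G B)) :=
  ⟨Quotient.map' F (fun a b hab => by
      obtain ⟨g, hg⟩ := MulAction.mem_orbit_iff.mp (MulAction.orbitRel_apply.mp hab)
      exact MulAction.orbitRel_apply.mpr
        (MulAction.mem_orbit_iff.mpr ⟨g, by rw [← hg, hF]⟩)),
    F.continuous.quotient_map' _⟩

open Topology

/-!
An equivariant motion planner `s : U → C([0,1], X)` over a `G`-invariant open set `U ⊆ X^r`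
gives the section `(x, p) ↦ (s x, p)` of `ρ_r × 1` over `U × P`; by equivariance it is constant
on orbits, so it descends to a continuous section of `ρ_r ×_G 1` over the open image of `U × P`
in `(X^r × P)/G`. These images cover the orbit space whenever the sets `U` cover `X^r`.
-/

def HasEquivariantSectionOn (G : Type*) {A B : Type*} [Group G] [MulAction G A] [MulAction G B]
    [TopologicalSpace A] [TopologicalSpace B] (F : A → B) (W : Set B) : Prop :=
  ∃ s : C(W, A), (∀ w, F (s w) = w) ∧
    ∀ (v w : W) (g : G), (w : B) = g • (v : B) → s w = g • s v

namespace MulAction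

variable {G A B : Type*} [Group G] [MulAction G A] [MulAction G B]

theorem preimage_image_quotient_mk_of_smul_mem {W : Set B} (hW : ∀ g : G, ∀ b ∈ W, g • b ∈ W) :
    Quotient.mk (orbitRel G B) ⁻¹' (Quotient.mk _ '' W) = W := by
  refine Set.Subset.antisymm ?_ (Set.subset_preimage_image _ _)
  rintro b ⟨w, hw, hwb⟩
  obtain ⟨g, rfl⟩ := Quotient.exact hwb
  simpa using hW g⁻¹ _ hw

variable [TopologicalSpace A] [TopologicalSpace B]

theorem isOpen_image_quotient_mk_of_smul_mem {W : Set B} (hWo : IsOpen W)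
    (hW : ∀ g : G, ∀ b ∈ W, g • b ∈ W) : IsOpen (Quotient.mk (orbitRel G B) '' W) :=
  isQuotientMap_quotient_mk'.isOpen_preimage.mp
    ((preimage_image_quotient_mk_of_smul_mem hW).symm ▸ hWo)

theorem exists_section_inducedQuotMap (F : C(A, B)) (hF : ∀ (g : G) (a : A), F (g • a) = g • F a)
    {W : Set B} (hWo : IsOpen W) (hW : ∀ g : G, ∀ b ∈ W, g • b ∈ W)
    (hs : HasEquivariantSectionOn G F W) :
    ∃ s : C(Quotient.mk (orbitRel G B) '' W, Quotient (orbitRel G A)),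
      ∀ v, inducedQuotMap F hF (s v) = v := by
  obtain ⟨s, hsF, hsG⟩ := hs
  set q := Quotient.mk (orbitRel G B)
  have hpre := preimage_image_quotient_mk_of_smul_mem hW
  let π : C(q ⁻¹' (q '' W), q '' W) := ⟨_, continuous_quotient_mk'.restrictPreimage⟩
  have hπ : IsQuotientMap π := isQuotientMap_quotient_mk'.restrictPreimage_isOpen
    (isOpen_image_quotient_mk_of_smul_mem hWo hW)
  let toW := ContinuousMap.inclusion hpre.subset
  let lift : C(q ⁻¹' (q '' W), Quotient (orbitRel G A)) :=
    (⟨Quotient.mk _, continuous_quotient_mk'⟩ : C(A, _)).comp (s.comp toW)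
  have hlift : Function.FactorsThrough lift π := by
    intro z z' hzz'
    obtain ⟨g, hg⟩ := Quotient.exact (congrArg Subtype.val hzz')
    exact Quotient.sound ⟨g, (hsG (toW z') (toW z) g hg.symm).symm⟩
  refine ⟨hπ.lift lift hlift, fun v => ?_⟩
  obtain ⟨z, rfl⟩ := hπ.surjective v
  have hlift_π : hπ.lift lift hlift (π z) = lift z :=
    DFunLike.congr_fun (hπ.lift_comp lift hlift) z
  rw [hlift_π]
  exact congrArg q (hsF (toW z))

end MulAction

section

variable {G A B : Type*} [Group G] [MulAction G A] [MulAction G B]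
  [TopologicalSpace A] [TopologicalSpace B]

theorem secat_inducedQuotMap_le (F : C(A, B)) (hF : ∀ (g : G) (a : A), F (g • a) = g • F a)
    {m : ℕ} (W : Fin (m + 1) → Set B) (hWo : ∀ i, IsOpen (W i)) (hcover : ⋃ i, W i = Set.univ)
    (hW : ∀ i (g : G), ∀ b ∈ W i, g • b ∈ W i) (hs : ∀ i, HasEquivariantSectionOn G F (W i)) :
    secat (inducedQuotMap F hF) ≤ m := by
  refine sInf_le ⟨m, rfl, fun i => Quotient.mk _ '' W i,
    fun i => MulAction.isOpen_image_quotient_mk_of_smul_mem (hWo i) (hW i), ?_,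
    fun i => MulAction.exists_section_inducedQuotMap F hF (hWo i) (hW i) (hs i)⟩
  rw [← Set.image_iUnion, hcover, Set.image_univ_of_surjective Quotient.mk_surjective]

theorem HasEquivariantSectionOn.prodMap_id {F : C(A, B)} {U : Set B}
    (hs : HasEquivariantSectionOn G F U) (P : Type*) [TopologicalSpace P] [MulAction G P] :
    HasEquivariantSectionOn G (F.prodMap (ContinuousMap.id P)) (Prod.fst ⁻¹' U) := by
  obtain ⟨s, hsF, hsG⟩ := hs
  refine ⟨⟨fun z => (s ⟨z.1.1, z.2⟩, z.1.2), by fun_prop⟩, fun z => Prod.ext (hsF _) rfl,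
    fun v w g hvw => Prod.ext (hsG _ _ g (congrArg Prod.fst hvw)) (Prod.ext_iff.mp hvw).2⟩

end

theorem hasEquivariantSectionOn_pathEval {G X : Type*} [Group G] [TopologicalSpace G]
    [TopologicalSpace X] [MulAction G X] [ContinuousSMul G X] {r : ℕ} (t : Fin r → I)
    {U : Set (Fin r → X)} (s : C(U, C(I, X))) (hst : ∀ x : U, ∀ j, s x (t j) = (x : Fin r → X) j)
    (hsG : ∀ (x y : U) (g : G), (y : Fin r → X) = g • (x : Fin r → X) → ∀ κ, s y κ = g • s x κ) :
    HasEquivariantSectionOn G (pathEval X t) U :=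
  ⟨s, fun x => funext (hst x), fun x y g hxy => ContinuousMap.ext (hsG x y g hxy)⟩

/-- For a topological group `G` acting continuously on spaces `X` and `P` and
`r ≥ 2`, the sectional category of the map `ρ_r ×_G 1 : (C([0,1],X) × P)/G → (X^r × P)/G`
induced on orbit spaces of the diagonal actions by `ρ_r × id_P` is bounded above by the
sequential equivariant topological complexity `TC_{r,G}(X)`. -/
theorem secat_inducedQuotMap_le_eqTC {G X P : Type*} [Group G] [TopologicalSpace G]
    [TopologicalSpace X] [MulAction G X] [ContinuousSMul G X]
    [TopologicalSpace P] [MulAction G P]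
    {r : ℕ} (t : Fin r → unitInterval) :
    secat (inducedQuotMap (G := G) ((pathEval X t).prodMap (ContinuousMap.id P))
      (fun g z => by
        ext i
        · simp [pathEval]
        · simp)) ≤ eqTC G X t := by
  refine le_sInf ?_
  rintro _ ⟨m, rfl, U, hUo, hUc, hUinv, hUs⟩
  refine secat_inducedQuotMap_le _ _ (fun i => Prod.fst ⁻¹' U i)
    (fun i => (hUo i).preimage continuous_fst)
    (by rw [← Set.preimage_iUnion, hUc, Set.preimage_univ])
    (fun i g z hz => hUinv i g z.1 hz) (fun i => ?_)
  obtain ⟨s, hst, hsG⟩ := hUs i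
  exact (hasEquivariantSectionOn_pathEval t s hst hsG).prodMap_id P
end

section
/- Let G be a topological group acting continuously and freely on a path-connected separable metric space X, let r ≥ 2, and let q_r : X^r → X^r/G be the quotient map for the diagonal G-action. Assume that q_r has the G-equivariant homotopy lifting property: for every separable metric space Y with a continuous G-action, every G-equivariant continuous map f : Y → X^r and every homotopy F : Y × [0,1] → X^r/G with F(·, 0) = q_r ∘ f, there exists a homotopy H : Y × [0,1] → X^r such that H(·, 0) = f, each map H(·, t) is G-equivariant, and q_r ∘ H = F. Then TC_{r,G}(X) ≤ cat(X^r/G). -/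
open scoped unitInterval

/-- The Lusternik–Schnirelmann category `cat(Y)`: the least `n` such that `Y` is covered by
`n+1` open sets, each of whose inclusion into `Y` is homotopic to a constant map. -/
noncomputable def lsCat (Y : Type*) [TopologicalSpace Y] : ℕ∞ :=
  sInf {n : ℕ∞ | ∃ m : ℕ, n = m ∧ ∃ U : Fin (m + 1) → Set Y,
    (∀ i, IsOpen (U i)) ∧ (⋃ i, U i) = Set.univ ∧
    ∀ i, ∃ y₀ : Y, (⟨Subtype.val, continuous_subtype_val⟩ : C((U i : Set Y), Y)).Homotopic
      (ContinuousMap.const _ y₀)}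

/-!
Let `U ⊆ X^r/G` be open with null-homotopic inclusion. Since `X^r/G` is path-connected, the
null-homotopy may be taken to end at the orbit of a diagonal point `(x₀, …, x₀)`; composed with
the orbit map it is a homotopy on the invariant open set `W = q⁻¹ U`, which lifts equivariantly to
`H : W × I → X^r` with `H (x, 0) = x` and every `H (x, 1)` on the diagonal. The section sends `x`
to the path that between consecutive times `t j` runs along coordinate `j` of `H (x, ·)` to the
diagonal and back along coordinate `j + 1`; it is equivariant because `H` is.
-/

open Set Function Real Topology

universe u

namespace EquivariantTC

theorem continuous_apply_of_closed_cover {Z X ι : Type*} [TopologicalSpace Z]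
    [TopologicalSpace X] [Finite ι] {F : Z → ι → X} (hF : Continuous F) {A : ι → Set Z}
    (hA : ∀ k, IsClosed (A k)) (hcover : ⋃ k, A k = univ) {n : Z → ι}
    (hn : ∀ k, ∀ z ∈ A k, F z (n z) = F z k) : Continuous fun z => F z (n z) :=
  (locallyFinite_of_finite A).continuous hcover hA fun k =>
    ((continuous_apply k).comp hF).continuousOn.congr fun z hz => hn k z hz

section Zigzag

noncomputable def wave (p : ℝ) : I :=
  ⟨(1 - cos (2 * π * p)) / 2, by
    constructor <;> linarith [neg_one_le_cos (2 * π * p), cos_le_one (2 * π * p)]⟩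

theorem continuous_wave : Continuous wave :=
  Continuous.subtype_mk (by fun_prop) _

theorem wave_natCast (k : ℕ) : wave k = 0 := by
  ext
  simp [wave, mul_comm (2 * π), cos_nat_mul_two_pi]

theorem wave_natCast_add_half (k : ℕ) : wave (k + 1 / 2) = 1 := by
  ext
  have : 2 * π * (k + 1 / 2) = k * (2 * π) + π := by ring
  simp only [wave, this, cos_add_pi, cos_nat_mul_two_pi]
  norm_num

theorem floor_add_half_eq_or {k : ℕ} {p : ℝ} (hp : p ∈ Icc ((k : ℝ) - 1 / 2) (k + 1 / 2)) :
    ⌊p + 1 / 2⌋₊ = k ∨ p = k + 1 / 2 := by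
  rcases hp.2.eq_or_lt with h | h
  · exact Or.inr h
  · exact Or.inl ((Nat.floor_eq_iff (by linarith [hp.1, k.cast_nonneg (α := ℝ)])).2
      ⟨by linarith [hp.1], by linarith⟩)

variable {r : ℕ} [NeZero r]

theorem zero_le_natCast_sub_one : (0 : ℝ) ≤ r - 1 := by
  have := NeZero.one_le (n := r)
  rw [sub_nonneg]; exact_mod_cast this

noncomputable def nodeCoord (t : Fin r → I) : C(I, ℝ) :=
  ⟨fun κ => projIcc (0 : ℝ) (r - 1) zero_le_natCast_sub_one
    ((Lagrange.interpolate Finset.univ (fun j => (t j : ℝ)) (fun j => ((j : ℕ) : ℝ))).eval κ),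
    continuous_subtype_val.comp (continuous_projIcc.comp
      ((Polynomial.continuous _).comp continuous_subtype_val))⟩

theorem nodeCoord_mem (t : Fin r → I) (κ : I) : nodeCoord t κ ∈ Icc (0 : ℝ) (r - 1) :=
  Subtype.prop _

theorem nodeCoord_node {t : Fin r → I} (ht : Injective t) (j : Fin r) :
    nodeCoord t (t j) = (j : ℕ) := by
  have hnode := Lagrange.eval_interpolate_at_node (v := fun j => (t j : ℝ))
    (fun j : Fin r => ((j : ℕ) : ℝ)) (Subtype.val_injective.comp ht).injOn (Finset.mem_univ j)
  simp only [nodeCoord, ContinuousMap.coe_mk] at hnode ⊢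
  rw [hnode, projIcc_of_mem _ ⟨j.val.cast_nonneg, ?_⟩]
  have := j.isLt
  have : (j : ℝ) + 1 ≤ r := by exact_mod_cast this
  linarith

noncomputable def nearestNode (t : Fin r → I) (κ : I) : Fin r :=
  ⟨⌊nodeCoord t κ + 1 / 2⌋₊, (Nat.floor_lt (by linarith [(nodeCoord_mem t κ).1])).2
    (by linarith [(nodeCoord_mem t κ).2])⟩

theorem nearestNode_node {t : Fin r → I} (ht : Injective t) (j : Fin r) :
    nearestNode t (t j) = j := by
  ext
  simp only [nearestNode, nodeCoord_node ht]
  exact Nat.floor_eq_iff (by positivity) |>.2 ⟨by linarith, by linarith⟩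

theorem nodeCoord_mem_Icc_nearestNode (t : Fin r → I) (κ : I) :
    nodeCoord t κ ∈ Icc ((nearestNode t κ : ℕ) - 1 / 2 : ℝ) ((nearestNode t κ : ℕ) + 1 / 2) := by
  have h0 : 0 ≤ nodeCoord t κ + 1 / 2 := by linarith [(nodeCoord_mem t κ).1]
  have := Nat.floor_le h0
  have := Nat.lt_floor_add_one (nodeCoord t κ + 1 / 2)
  simp only [nearestNode]
  constructor <;> linarith

variable {Y X : Type*}

/-- Along `nodeCoord t`, the path `zigzag H t y` follows coordinate `j` of `H (y, ·)` from
`H (y, 0) j` to `H (y, 1)` and then coordinate `j + 1` back to `H (y, 0) (j + 1)`; it is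
continuous when every `H (y, 1)` is a diagonal point. -/
noncomputable def zigzag (H : Y × I → Fin r → X) (t : Fin r → I) (y : Y) (κ : I) : X :=
  H (y, wave (nodeCoord t κ)) (nearestNode t κ)

theorem zigzag_node (H : Y × I → Fin r → X) {t : Fin r → I} (ht : Injective t) (y : Y)
    (j : Fin r) : zigzag H t y (t j) = H (y, 0) j := by
  simp only [zigzag, nodeCoord_node ht, nearestNode_node ht, wave_natCast]

variable [TopologicalSpace Y] [TopologicalSpace X]

theorem continuous_zigzag {H : Y × I → Fin r → X} (hH : Continuous H)
    (hdiag : ∀ y a b, H (y, 1) a = H (y, 1) b) (t : Fin r → I) :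
    Continuous (uncurry (zigzag H t)) := by
  have hcoord : Continuous fun z : Y × I => nodeCoord t z.2 := by fun_prop
  refine continuous_apply_of_closed_cover (F := fun z : Y × I => H (z.1, wave (nodeCoord t z.2)))
    (A := fun k => {z : Y × I | nodeCoord t z.2 ∈ Icc ((k : ℕ) - 1 / 2 : ℝ) ((k : ℕ) + 1 / 2)})
    (hH.comp (continuous_fst.prodMk (continuous_wave.comp hcoord)))
    (fun k => isClosed_Icc.preimage hcoord)
    (eq_univ_of_forall fun z => mem_iUnion.2 ⟨_, nodeCoord_mem_Icc_nearestNode t z.2⟩) ?_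
  intro k z hz
  rcases floor_add_half_eq_or hz with hk | hk
  · exact congrArg _ (Fin.ext hk)
  · simp only [hk, wave_natCast_add_half]
    exact hdiag _ _ _

end Zigzag

section HomotopyLifting

variable (G E Y : Type*) [Group G] [TopologicalSpace E] [MulAction G E] [TopologicalSpace Y]
  [MulAction G Y]

def LiftsEquivariantHomotopies : Prop :=
  ∀ f : C(Y, E), (∀ (g : G) (y : Y), f (g • y) = g • f y) →
    ∀ F : C(Y × I, Quotient (MulAction.orbitRel G E)), (∀ y, F (y, 0) = Quotient.mk _ (f y)) →
      ∃ H : C(Y × I, E), (∀ y, H (y, 0) = f y) ∧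
        (∀ (g : G) (y : Y) (s : I), H (g • y, s) = g • H (y, s)) ∧
        ∀ z, Quotient.mk (MulAction.orbitRel G E) (H z) = F z

variable {G E Y}

theorem LiftsEquivariantHomotopies.of_homeomorph {Z : Type*} [TopologicalSpace Z]
    [MulAction G Z] (e : Y ≃ₜ Z) (he : ∀ (g : G) (y : Y), e (g • y) = g • e y)
    (h : LiftsEquivariantHomotopies G E Z) : LiftsEquivariantHomotopies G E Y := by
  intro f hf F hF
  have he' : ∀ (g : G) (z : Z), e.symm (g • z) = g • e.symm z := fun g z => by
    rw [e.symm_apply_eq, he, e.apply_symm_apply]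
  obtain ⟨H, hH0, hHG, hHF⟩ := h (f.comp e.symm) (fun g z => by simp [he', hf])
    (F.comp ((e.symm : C(Z, Y)).prodMap (ContinuousMap.id I))) (fun z => hF _)
  refine ⟨H.comp ((e : C(Y, Z)).prodMap (ContinuousMap.id I)), fun y => ?_, fun g y s => ?_,
    fun z => ?_⟩
  · simpa using hH0 (e y)
  · simpa [he] using hHG g (e y) s
  · simpa [Prod.map] using hHF (Prod.map e id z)

open TopologicalSpace in
theorem LiftsEquivariantHomotopies.of_secondCountableTopology [TopologicalSpace G]
    (hlift : ∀ (Y : Type u) [TopologicalSpace Y] [MetrizableSpace Y] [SeparableSpace Y]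
      [MulAction G Y] [ContinuousSMul G Y], LiftsEquivariantHomotopies G E Y)
    (Z : Type*) [TopologicalSpace Z] [MetrizableSpace Z] [SecondCountableTopology Z]
    [MulAction G Z] [ContinuousSMul G Z] : LiftsEquivariantHomotopies G E Z := by
  -- `hlift` only covers spaces in universe `u`, so move `Z` into `ℓ^∞` and lift the universe.
  have : T3Space Z := by
    let := metrizableSpaceMetric Z
    infer_instance
  obtain ⟨e, he⟩ := exists_embedding_l_infty Z
  let φ : Z ≃ₜ ULift.{u} (range e) := he.toHomeomorph.trans Homeomorph.ulift.symm
  let : MulAction G (ULift.{u} (range e)) := φ.symm.toEquiv.mulAction G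
  have : MetrizableSpace (ULift.{u} (range e)) := φ.symm.isEmbedding.metrizableSpace
  have : SecondCountableTopology (ULift.{u} (range e)) := φ.symm.secondCountableTopology
  have hφ : ∀ (g : G) (z : Z), φ (g • z) = g • φ z := fun g z => by
    simp [Equiv.smul_def]
  have : ContinuousSMul G (ULift.{u} (range e)) := ⟨by
    simp only [Equiv.smul_def]
    exact φ.continuous.comp (continuous_fst.smul (φ.symm.continuous.comp continuous_snd))⟩
  exact (hlift _).of_homeomorph φ hφ

end HomotopyLifting

section OrbitSpace

variable {G E : Type*} [Group G] [MulAction G E]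

theorem apply_eq_apply_of_mk_eq_mk_const {ι : Type*} {x : ι → E} {e₀ : E}
    (h : Quotient.mk (MulAction.orbitRel G (ι → E)) x = Quotient.mk _ fun _ => e₀) (a b : ι) :
    x a = x b := by
  obtain ⟨g, rfl⟩ := Quotient.exact h
  rfl

def orbitPreimage (U : Set (Quotient (MulAction.orbitRel G E))) : SubMulAction G E where
  carrier := Quotient.mk _ ⁻¹' U
  smul_mem' g x hx := by
    rwa [mem_preimage, Quotient.sound (MulAction.mem_orbit x g)]

end OrbitSpace

open TopologicalSpace in
theorem exists_equivariant_section_of_nullhomotopic {G X : Type*} [Group G] [TopologicalSpace G]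
    [TopologicalSpace X] [PathConnectedSpace X] [MetrizableSpace X] [SeparableSpace X]
    [MulAction G X] [ContinuousSMul G X] {r : ℕ} [NeZero r] {t : Fin r → I} (ht : Injective t)
    (hlift : ∀ (Y : Type u) [TopologicalSpace Y] [MetrizableSpace Y] [SeparableSpace Y]
      [MulAction G Y] [ContinuousSMul G Y], LiftsEquivariantHomotopies G (Fin r → X) Y)
    {U : Set (Quotient (MulAction.orbitRel G (Fin r → X)))}
    (hU : ∃ y₀, (⟨Subtype.val, continuous_subtype_val⟩ : C(U, _)).Homotopic
      (ContinuousMap.const _ y₀)) :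
    ∃ s : C(↥(Quotient.mk _ ⁻¹' U), C(I, X)), (∀ x j, s x (t j) = (x : Fin r → X) j) ∧
      ∀ (x y : ↥(Quotient.mk _ ⁻¹' U)) (g : G), (y : Fin r → X) = g • (x : Fin r → X) →
        ∀ κ, s y κ = g • s x κ := by
  obtain ⟨y₀, hy₀⟩ := hU
  obtain ⟨x₀⟩ : Nonempty X := inferInstance
  obtain ⟨F⟩ := hy₀.trans
    ⟨(PathConnectedSpace.somePath y₀ (Quotient.mk _ fun _ => x₀)).toHomotopyConst⟩
  have : SecondCountableTopology X := by
    let := pseudoMetrizableSpacePseudoMetric X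
    exact UniformSpace.secondCountable_of_separable X
  let W := orbitPreimage (G := G) U
  have : MetrizableSpace W := IsEmbedding.subtypeVal.metrizableSpace
  obtain ⟨H, hH0, hHG, hHF⟩ := LiftsEquivariantHomotopies.of_secondCountableTopology hlift W
    ⟨Subtype.val, continuous_subtype_val⟩ (fun _ _ => rfl)
    (F.toContinuousMap.comp ⟨fun z => (z.2, ⟨_, z.1.2⟩), continuous_snd.prodMk
      ((continuous_quotient_mk'.comp (continuous_subtype_val.comp continuous_fst)).subtype_mk _)⟩)
    (fun w => F.apply_zero _)
  have hdiag : ∀ w a b, H (w, 1) a = H (w, 1) b := fun w =>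
    apply_eq_apply_of_mk_eq_mk_const ((hHF (w, 1)).trans (F.apply_one _))
  refine ⟨(ContinuousMap.mk _ (continuous_zigzag H.continuous hdiag t)).curry,
    fun x j => ?_, fun x y g hxy κ => ?_⟩
  · exact (zigzag_node H ht x j).trans (congrFun (hH0 x) j)
  · have hy : (show W from y) = g • (show W from x) := Subtype.ext hxy
    exact (congrArg (fun w => zigzag H t w κ) hy).trans (congrFun (hHG g x _) _)

end EquivariantTC

open EquivariantTC in
/-- Let `G` be a topological group acting continuously and freely on a
path-connected separable metric space `X` and assume that the quotient map
`q_r : X^r → X^r/G` of the diagonal action has the `G`-equivariant homotopy lifting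
property for separable metric `G`-spaces. Then `TC_{r,G}(X) ≤ cat(X^r/G)`. -/
theorem eqTC_le_lsCat_orbit {G X : Type*} [Group G] [TopologicalSpace G]
    [TopologicalSpace X] [PathConnectedSpace X] [TopologicalSpace.MetrizableSpace X]
    [TopologicalSpace.SeparableSpace X] [MulAction G X] [ContinuousSMul G X]
    {r : ℕ} (hr : 2 ≤ r) (t : Fin r → unitInterval) (htm : StrictMono t)
    (hHLP : ∀ (Y : Type*) [TopologicalSpace Y] [TopologicalSpace.MetrizableSpace Y]
      [TopologicalSpace.SeparableSpace Y] [MulAction G Y] [ContinuousSMul G Y]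
      (f : C(Y, Fin r → X)), (∀ (g : G) (y : Y), f (g • y) = g • f y) →
      ∀ F : C(Y × I, Quotient (MulAction.orbitRel G (Fin r → X))),
        (∀ y, F (y, 0) = Quotient.mk _ (f y)) →
        ∃ H : C(Y × I, Fin r → X), (∀ y, H (y, 0) = f y) ∧
          (∀ (g : G) (y : Y) (s : I), H (g • y, s) = g • H (y, s)) ∧
          ∀ z, Quotient.mk (MulAction.orbitRel G (Fin r → X)) (H z) = F z) :
    eqTC G X t ≤ lsCat (Quotient (MulAction.orbitRel G (Fin r → X))) := by
  have : NeZero r := ⟨by omega⟩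
  apply sInf_le_sInf
  rintro _ ⟨m, rfl, U, hU, hUcover, hUcat⟩
  exact ⟨m, rfl, fun i => Quotient.mk _ ⁻¹' U i,
    fun i => (hU i).preimage continuous_quotient_mk',
    by rw [← preimage_iUnion, hUcover, preimage_univ],
    fun i g x hx => (orbitPreimage (U i)).smul_mem g hx,
    fun i => exists_equivariant_section_of_nullhomotopic htm.injective hHLP (hUcat i)⟩
end

section
/- Let the group G = ℤ/2 act continuously on the circle S¹ = {z ∈ ℂ : |z| = 1} with the nontrivial element acting by complex conjugation z ↦ z̄. Then, for r = 2 with t_1 = 0 and t_2 = 1, the weak equivariant topological complexity satisfies TC^w_{2,G}(S¹) = 1. -/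
open scoped unitInterval

/-- The orbit quotient map `X → X/G` as a continuous map. -/
noncomputable def orbitQuotMap (G X : Type*) [Group G] [MulAction G X]
    [TopologicalSpace X] : C(X, Quotient (MulAction.orbitRel G X)) :=
  ⟨Quotient.mk _, continuous_quotient_mk'⟩

/-- Complex conjugation `z ↦ z̄` on the unit circle `S¹ ⊆ ℂ`. -/
noncomputable def circleConj (z : Circle) : Circle :=
  ⟨(starRingEnd ℂ) (z : ℂ), by
    have := Circle.norm_coe z
    simp only [Submonoid.unitSphere] at *
    simp [mem_sphere_zero_iff_norm, this]⟩

@[simp] lemma circleConj_circleConj (z : Circle) : circleConj (circleConj z) = z :=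
  Circle.ext (by simp [circleConj])

/-- The action of `G = ℤ/2` on the circle in which the nontrivial element acts by complex
conjugation `z ↦ z̄`. -/
noncomputable instance : SMul (Multiplicative (ZMod 2)) Circle :=
  ⟨fun g z => if g = 1 then z else circleConj z⟩

lemma zmod2_smul_circle_def (g : Multiplicative (ZMod 2)) (z : Circle) :
    g • z = if g = 1 then z else circleConj z := rfl

noncomputable instance : MulAction (Multiplicative (ZMod 2)) Circle where
  one_smul z := if_pos rfl
  mul_smul g h z := by
    have hcases : ∀ a : Multiplicative (ZMod 2),
        a = 1 ∨ a = Multiplicative.ofAdd 1 := by decide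
    have hne : (Multiplicative.ofAdd (1 : ZMod 2)) ≠ 1 := by decide
    have hsq : (Multiplicative.ofAdd (1 : ZMod 2)) * Multiplicative.ofAdd (1 : ZMod 2) = 1 := by
      decide
    rcases hcases g with hg | hg <;> rcases hcases h with hh | hh <;> subst hg <;> subst hh <;>
      simp [zmod2_smul_circle_def, hne, hsq]

/-! The nontrivial element of `ℤ/2` acts on `S¹` by `z ↦ z̄ = z⁻¹`, so the open sets
`{(x, y) | y ≠ x}` and `{(x, y) | y ≠ -x}` of `S¹ × S¹` are invariant and cover it. On each of
them the angle of `y / x` admits a continuous branch `θ`, and `t ↦ x e^{i t θ}` is a continuous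
motion planner; hence `TC^w ≤ 1`.

A single section over all of `S¹ × S¹`, restricted to pairs `(x, 1)`, would contract `S¹`.
Lifting such a contraction along the covering `exp : ℝ → S¹` yields a continuous logarithm
`ψ : S¹ → ℝ`; by uniqueness of lifts `ψ (e^{iθ}) = θ + ψ 1`, which contradicts periodicity. -/

open Complex Function
open scoped Real

section secatf

variable {E B C : Type*} [TopologicalSpace E] [TopologicalSpace B] [TopologicalSpace C]

theorem exists_section_of_secatf_lt_one {p : C(E, B)} {f : C(B, C)} (h : secatf p f < 1) :
    ∃ s : C(B, E), ∀ b, p (s b) = b := by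
  obtain ⟨_, ⟨m, rfl, U, -, hcover, hsec⟩, hm⟩ := sInf_lt_iff.mp h
  obtain rfl : m = 0 := by exact_mod_cast Order.lt_one_iff.mp hm
  obtain ⟨s, hs⟩ := hsec 0
  have hU : ∀ b, b ∈ f ⁻¹' U 0 := fun b => by simpa using hcover ⟨b, rfl⟩
  exact ⟨s.comp ⟨fun b => ⟨b, hU b⟩, by fun_prop⟩, fun b => hs _⟩

end secatf

section orbitQuotMap

variable {G X : Type*} [Group G] [MulAction G X] [TopologicalSpace X] {V : Set X}

theorem preimage_image_orbitQuotMap (hV : ∀ g : G, ∀ v ∈ V, g • v ∈ V) :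
    orbitQuotMap G X ⁻¹' (orbitQuotMap G X '' V) = V := by
  refine (MulAction.quotient_preimage_image_eq_union_mul V).trans
    (subset_antisymm (Set.iUnion_subset fun g => ?_) ?_)
  · rintro _ ⟨v, hv, rfl⟩
    exact hV g v hv
  · exact fun v hv => Set.mem_iUnion.mpr ⟨1, v, hv, one_smul G v⟩

theorem isOpen_image_orbitQuotMap (hVo : IsOpen V) (hV : ∀ g : G, ∀ v ∈ V, g • v ∈ V) :
    IsOpen (orbitQuotMap G X '' V) := by
  rw [← isQuotientMap_quotient_mk'.isOpen_preimage]
  exact (preimage_image_orbitQuotMap hV).symm ▸ hVo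

theorem secatf_orbitQuotMap_le {E : Type*} [TopologicalSpace E] {p : C(E, X)} {m : ℕ}
    (V : Fin (m + 1) → Set X) (hVo : ∀ i, IsOpen (V i))
    (hV : ∀ i, ∀ g : G, ∀ v ∈ V i, g • v ∈ V i) (hcover : ⋃ i, V i = Set.univ)
    (hsec : ∀ i, ∃ s : C(V i, E), ∀ v, p (s v) = v) :
    secatf p (orbitQuotMap G X) ≤ m := by
  refine sInf_le ⟨m, rfl, fun i => orbitQuotMap G X '' V i,
    fun i => isOpen_image_orbitQuotMap (hVo i) (hV i), ?_, fun i => ?_⟩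
  · rintro _ ⟨x, rfl⟩
    obtain ⟨i, hi⟩ := Set.mem_iUnion.mp (hcover.symm ▸ Set.mem_univ x)
    exact Set.mem_iUnion.mpr ⟨i, x, hi, rfl⟩
  · rw [preimage_image_orbitQuotMap (hV i)]
    exact hsec i

end orbitQuotMap

theorem contractibleSpace_of_pathEval_section {X : Type*} [TopologicalSpace X] (x₀ : X)
    (s : C(Fin 2 → X, C(I, X))) (hs : ∀ v, pathEval X ![0, 1] (s v) = v) :
    ContractibleSpace X := by
  have hs' (x : X) (i : Fin 2) : s ![x, x₀] (![0, 1] i) = ![x, x₀] i := congrFun (hs ![x, x₀]) i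
  rw [contractible_iff_id_nullhomotopic]
  exact ⟨x₀, ⟨{ toFun := fun tx => s ![tx.2, x₀] tx.1
                continuous_toFun := by fun_prop
                map_zero_left := fun x => hs' x 0
                map_one_left := fun x => hs' x 1 }⟩⟩

namespace Circle

theorem not_leftInverse_exp (ψ : C(Circle, ℝ)) : ¬ LeftInverse exp ψ := by
  intro hψ
  have hlift : (fun θ : ℝ => ψ (exp θ)) = fun θ => θ + ψ 1 :=
    isCoveringMap_exp.eq_of_comp_eq (ψ.continuous.comp exp.continuous)
      (continuous_id.add continuous_const)
      (funext fun θ => by simp [hψ (exp θ), exp_add, hψ 1]) 0 (by simp)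
  have := congrFun hlift (2 * π)
  simp only [exp_two_pi] at this
  linarith [Real.pi_pos]

theorem not_contractibleSpace : ¬ ContractibleSpace Circle := by
  rw [contractible_iff_id_nullhomotopic]
  rintro ⟨z, ⟨H⟩⟩
  let L := isCoveringMap_exp.liftHomotopy H.symm.toContinuousMap (.const _ (arg z))
    (fun x => by simp)
  refine not_leftInverse_exp ⟨fun x => L (1, x), by fun_prop⟩ fun x => ?_
  simpa using congrFun (isCoveringMap_exp.liftHomotopy_lifts H.symm.toContinuousMap _ _) (1, x)

theorem arg_eq_pi_iff {z : Circle} : arg z = π ↔ z = exp π := by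
  rw [← arg_eq_arg, arg_exp (by linarith [Real.pi_pos]) le_rfl]

theorem continuousAt_arg {z : Circle} (hz : z ≠ exp π) :
    ContinuousAt (fun w : Circle => arg w) z :=
  (Complex.continuousAt_arg
    (mem_slitPlane_iff_arg.mpr ⟨mt arg_eq_pi_iff.mp hz, coe_ne_zero z⟩)).comp
      continuous_subtype_val.continuousAt

theorem exists_log_continuousOn_compl_singleton (α : ℝ) :
    ∃ θ : Circle → ℝ, ContinuousOn θ {exp α}ᶜ ∧ LeftInverse exp θ := by
  refine ⟨fun z => arg ((z / exp (α + π) : Circle) : ℂ) + (α + π), fun z hz => ?_,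
    fun z => ?_⟩
  · have : z / exp (α + π) ≠ exp π := by
      rw [Ne, div_eq_iff_eq_mul, ← exp_add, show π + (α + π) = α + 2 * π by ring,
        exp_add_two_pi]
      exact hz
    exact (((continuousAt_arg this).comp (f := fun w => w / exp (α + π)) (by fun_prop)).add
      continuousAt_const).continuousWithinAt
  · rw [exp_add, exp_arg, div_mul_cancel]

end Circle

theorem circleConj_eq_inv (z : Circle) : circleConj z = z⁻¹ :=
  Circle.ext (Circle.coe_inv_eq_conj z).symm

theorem zmod2_smul_pi_circle {ι : Type*} (g : Multiplicative (ZMod 2)) (v : ι → Circle) :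
    g • v = if g = 1 then v else v⁻¹ := by
  funext i
  split_ifs <;> simp [zmod2_smul_circle_def, *, circleConj_eq_inv]

theorem exists_pathEval_section_of_log {V : Set (Fin 2 → Circle)} {θ : (Fin 2 → Circle) → ℝ}
    (hθ : ContinuousOn θ V) (hexp : ∀ v ∈ V, Circle.exp (θ v) = v 1 / v 0) :
    ∃ s : C(V, C(I, Circle)), ∀ v, pathEval Circle ![0, 1] (s v) = v := by
  refine ⟨ContinuousMap.curry ⟨fun vt => (vt.1 : Fin 2 → Circle) 0 *
      Circle.exp (vt.2 * θ vt.1), ?_⟩, fun v => funext fun i => ?_⟩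
  · have : Continuous fun v : V => θ v := hθ.domRestrict
    exact ((continuous_apply 0).comp (continuous_subtype_val.comp continuous_fst)).mul
      (Circle.exp.continuous.comp ((continuous_subtype_val.comp continuous_snd).mul
        (this.comp continuous_fst)))
  · fin_cases i
    · simp [pathEval]
    · simp [pathEval, hexp v v.2]

def ratioNe (α : ℝ) : Set (Fin 2 → Circle) := {v | v 1 / v 0 ≠ Circle.exp α}

theorem exists_pathEval_section_ratioNe (α : ℝ) :
    ∃ s : C(ratioNe α, C(I, Circle)), ∀ v, pathEval Circle ![0, 1] (s v) = v := by
  obtain ⟨θ, hθ, hexp⟩ := Circle.exists_log_continuousOn_compl_singleton α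
  exact exists_pathEval_section_of_log (θ := fun v => θ (v 1 / v 0))
    (hθ.comp (by fun_prop) fun v hv => hv) fun v _ => hexp _

theorem isOpen_ratioNe (α : ℝ) : IsOpen (ratioNe α) :=
  isOpen_ne_fun (by fun_prop) continuous_const

theorem zmod2_smul_mem_ratioNe {α : ℝ} (hα : Circle.exp (-α) = Circle.exp α)
    (g : Multiplicative (ZMod 2)) (v : Fin 2 → Circle) (hv : v ∈ ratioNe α) :
    g • v ∈ ratioNe α := by
  rw [zmod2_smul_pi_circle]
  split_ifs
  · exact hv
  · intro h
    apply hv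
    rw [← inv_inj, ← Circle.exp_neg, hα, ← h]
    simp [div_eq_mul_inv, mul_comm]

/-- For the action of `G = ℤ/2` on the circle `S¹ ⊆ ℂ` in which the
nontrivial element acts by complex conjugation, the weak equivariant topological complexity
(for `r = 2`, `t₁ = 0`, `t₂ = 1`) satisfies `TC^w_{2,G}(S¹) = 1`. -/
theorem weak_eqTC_circle_conj :
    secatf (pathEval Circle ![0, 1])
      (orbitQuotMap (Multiplicative (ZMod 2)) (Fin 2 → Circle)) = 1 := by
  refine le_antisymm ?_ (not_lt.mp fun h => ?_)
  · have hα : ∀ i : Fin 2, Circle.exp (-![0, π] i) = Circle.exp (![0, π] i) := by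
      rw [Fin.forall_fin_two]
      refine ⟨by simp, ?_⟩
      simp only [Matrix.cons_val_one, Matrix.cons_val_fin_one]
      rw [show -π = π - 2 * π by ring, Circle.exp_sub_two_pi]
    have hcover : ⋃ i : Fin 2, ratioNe (![0, π] i) = Set.univ :=
      Set.eq_univ_of_forall fun v => Set.mem_iUnion.mpr <| by
        by_cases h : v 1 / v 0 = 1
        · exact ⟨1, by simpa [ratioNe, h] using Circle.exp_pi_ne_one.symm⟩
        · exact ⟨0, by simpa [ratioNe] using h⟩
    exact secatf_orbitQuotMap_le (m := 1) _ (fun i => isOpen_ratioNe _)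
      (fun i => zmod2_smul_mem_ratioNe (hα i)) hcover
      (fun i => exists_pathEval_section_ratioNe _)
  · obtain ⟨s, hs⟩ := exists_section_of_secatf_lt_one h
    exact Circle.not_contractibleSpace (contractibleSpace_of_pathEval_section 1 s hs)
end
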